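/- Properties of the test function Φ^λ: let T > 0, ξ, ζ ∈ C¹([0,T]; ℝ) with ξ₀ = ζ₀ = 0, and let 0 < λ < 1/Δ_T^+. Define Φ^λ(x,y,t) := λ e_g(x,y) / (1 − λ(ξ_t − ζ_t)). Then (i) λ e_g(x,y)/(1 + λΔ_T^-) ≤ Φ^λ(x,y,t) ≤ λ e_g(x,y)/(1 − λΔ_T^+) for all (x,y,t) ∈ ℝ^N × ℝ^N × [0,T]; and (ii) on the set {(x,y) : d_g(x,y) < Υ} × [0,T], Φ^λ is a classical (pointwise differentiable) solution of ∂_t w = (g^{-1}(x) D_x w, D_x w) ξ̇ − (g^{-1}(y) D_y w, D_y w) ζ̇. -/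

import Mathlib

open Set MeasureTheory
noncomputable section

abbrev EV (N : ℕ) := EuclideanSpace ℝ (Fin N)

def quadForm {N : ℕ} (A : Matrix (Fin N) (Fin N) ℝ) (v w : EV N) : ℝ :=
  ∑ i, ∑ j, A i j * v i * w j

def energy {N : ℕ} (g : EV N → Matrix (Fin N) (Fin N) ℝ) (x y : EV N) : ℝ :=
  sInf { e : ℝ | ∃ γ : ℝ → EV N, ContDiffOn ℝ 1 γ (Icc (0:ℝ) 1) ∧ γ 0 = x ∧ γ 1 = y ∧
      e = ∫ t in (0:ℝ)..(1:ℝ), (1/4 : ℝ) * quadForm (g (γ t)) (deriv γ t) (deriv γ t) }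

def dg {N : ℕ} (g : EV N → Matrix (Fin N) (Fin N) ℝ) (x y : EV N) : ℝ :=
  Real.sqrt (energy g x y)

def ginv {N : ℕ} (g : EV N → Matrix (Fin N) (Fin N) ℝ) (x : EV N) : Matrix (Fin N) (Fin N) ℝ :=
  (g x)⁻¹

def UniformlyElliptic {N : ℕ} (g : EV N → Matrix (Fin N) (Fin N) ℝ) (C : ℝ) : Prop :=
  0 < C ∧ ∀ (x w : EV N), (1/C) * ‖w‖^2 ≤ quadForm (g x) w w ∧ quadForm (g x) w w ≤ C * ‖w‖^2

def DeltaPlus (ξ ζ : ℝ → ℝ) (T : ℝ) : ℝ := sSup ((fun s => ξ s - ζ s) '' Icc (0:ℝ) T)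

def DeltaMinus (ξ ζ : ℝ → ℝ) (T : ℝ) : ℝ := sSup ((fun s => ζ s - ξ s) '' Icc (0:ℝ) T)

/-- The test function `Φ^λ(x,y,t) = λ e_g(x,y) / (1 − λ(ξ_t − ζ_t))`. -/
def PhiL {N : ℕ} (g : EV N → Matrix (Fin N) (Fin N) ℝ) (ξ ζ : ℝ → ℝ) (lam : ℝ)
    (x y : EV N) (t : ℝ) : ℝ :=
  lam * energy g x y / (1 - lam * (ξ t - ζ t))

/-!
`Φ^λ(·, ·, t)` is `c(t) e_g` with `c(t) = λ / (1 - λ(ξ_t - ζ_t))`, and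
`1 - λΔ⁺ ≤ 1 - λ(ξ_t - ζ_t) ≤ 1 + λΔ⁻` on `[0, T]`, which gives the bounds. The eikonal equations
turn both `(g⁻¹ D_x Φ^λ, D_x Φ^λ)` and `(g⁻¹ D_y Φ^λ, D_y Φ^λ)` into `c(t)² e_g`, while
`ċ = c² (ξ̇ - ζ̇)`.

Differentiability of `e_g` in each variable comes from the eikonal equations too: where it fails,
the gradient is `0` and so `e_g(x, y) = 0`, which forces `x = y` by `|x - y|² / 4C ≤ e_g(x, y)`;
on the diagonal `0 ≤ e_g(·, x) ≤ C |· - x|² / 4` makes `e_g` differentiable.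
-/

lemma quadForm_zero {N : ℕ} (A : Matrix (Fin N) (Fin N) ℝ) : quadForm A 0 0 = 0 := by
  simp [quadForm]

lemma quadForm_smul_smul {N : ℕ} (A : Matrix (Fin N) (Fin N) ℝ) (a : ℝ) (v w : EV N) :
    quadForm A (a • v) (a • w) = a ^ 2 * quadForm A v w := by
  simp only [quadForm, Finset.mul_sum, PiLp.smul_apply, smul_eq_mul]
  exact Finset.sum_congr rfl fun i _ => Finset.sum_congr rfl fun j _ => by ring

lemma ContinuousOn.quadForm {α : Type*} [TopologicalSpace α] {N : ℕ}
    {A : α → Matrix (Fin N) (Fin N) ℝ} {v w : α → EV N} {s : Set α}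
    (hA : ContinuousOn A s) (hv : ContinuousOn v s) (hw : ContinuousOn w s) :
    ContinuousOn (fun a => quadForm (A a) (v a) (w a)) s := by
  unfold _root_.quadForm
  fun_prop

lemma gradient_const_mul {F : Type*} [NormedAddCommGroup F] [InnerProductSpace ℝ F]
    [CompleteSpace F] (f : F → ℝ) (x : F) (c : ℝ) :
    gradient (fun z => c * f z) x = c • gradient f x := by
  have : (fun z => c * f z) = c • f := rfl
  rw [gradient, gradient, this, fderiv_const_smul_field, Pi.smul_apply, map_smul]

lemma hasFDerivAt_zero_of_norm_sub_le_sq {𝕜 E F : Type*} [NontriviallyNormedField 𝕜]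
    [NormedAddCommGroup E] [NormedSpace 𝕜 E] [NormedAddCommGroup F] [NormedSpace 𝕜 F]
    {f : E → F} {z : E} (K : ℝ) (hf : ∀ w, ‖f w - f z‖ ≤ K * ‖w - z‖ ^ 2) :
    HasFDerivAt f (0 : E →L[𝕜] F) z := by
  rw [hasFDerivAt_iff_isLittleO_nhds_zero]
  refine Asymptotics.IsBigO.trans_isLittleO ?_ (Asymptotics.isLittleO_norm_pow_id one_lt_two)
  refine Asymptotics.IsBigO.of_bound K (Filter.Eventually.of_forall fun h => ?_)
  simpa [norm_pow] using hf (z + h)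

lemma differentiableAt_of_quadForm_gradient_eq {N : ℕ} {A : Matrix (Fin N) (Fin N) ℝ}
    {f : EV N → ℝ} {x : EV N} (hq : quadForm A (gradient f x) (gradient f x) = f x)
    (h0 : f x = 0 → DifferentiableAt ℝ f x) : DifferentiableAt ℝ f x := by
  by_contra hf
  rw [gradient_eq_zero_of_not_differentiableAt hf, quadForm_zero] at hq
  exact hf (h0 hq.symm)

lemma sq_intervalIntegral_le {f : ℝ → ℝ} {a b : ℝ} (hab : a < b)
    (hf : IntervalIntegrable f volume a b)
    (hf2 : IntervalIntegrable (fun t => f t ^ 2) volume a b) :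
    (∫ t in a..b, f t) ^ 2 ≤ (b - a) * ∫ t in a..b, f t ^ 2 := by
  have hjensen : (⨍ t in a..b, f t) ^ 2 ≤ ⨍ t in a..b, f t ^ 2 :=
    (Even.convexOn_pow even_two).map_set_average_le (continuous_pow 2).continuousOn isClosed_univ
      (by simp [uIoc_of_le hab.le, hab]) (by simp [uIoc_of_le hab.le])
      (Filter.Eventually.of_forall fun _ => mem_univ _) hf.def' hf2.def'
  rw [interval_average_eq, interval_average_eq, smul_eq_mul, smul_eq_mul] at hjensen
  have hba : 0 < b - a := sub_pos.2 hab
  calc (∫ t in a..b, f t) ^ 2 = (b - a) ^ 2 * ((b - a)⁻¹ * ∫ t in a..b, f t) ^ 2 := by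
        field_simp
    _ ≤ (b - a) ^ 2 * ((b - a)⁻¹ * ∫ t in a..b, f t ^ 2) := by gcongr
    _ = (b - a) * ∫ t in a..b, f t ^ 2 := by field_simp

lemma intervalIntegral_comp_deriv_eq_derivWithin {E F : Type*} [NormedAddCommGroup E]
    [NormedSpace ℝ E] [NormedAddCommGroup F] [NormedSpace ℝ F] (Φ : ℝ → E → F) (f : ℝ → E)
    {a b : ℝ} (hab : a ≤ b) :
    ∫ t in a..b, Φ t (deriv f t) = ∫ t in a..b, Φ t (derivWithin f (Icc a b) t) := by
  rw [intervalIntegral.integral_of_le hab, intervalIntegral.integral_of_le hab]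
  apply integral_congr_ae
  rw [← restrict_Ioo_eq_restrict_Ioc]
  filter_upwards [self_mem_ae_restrict measurableSet_Ioo] with t ht
  rw [derivWithin_of_mem_nhds (Icc_mem_nhds ht.1 ht.2)]

section Energy

variable {N : ℕ} {g : EV N → Matrix (Fin N) (Fin N) ℝ} {C : ℝ}

def pathEnergy (g : EV N → Matrix (Fin N) (Fin N) ℝ) (γ : ℝ → EV N) : ℝ :=
  ∫ t in (0:ℝ)..1, (1/4 : ℝ) * quadForm (g (γ t)) (deriv γ t) (deriv γ t)

lemma UniformlyElliptic.quadForm_nonneg (hell : UniformlyElliptic g C) (x w : EV N) :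
    0 ≤ quadForm (g x) w w :=
  le_trans (by have := hell.1; positivity) (hell.2 x w).1

lemma pathEnergy_nonneg (hell : UniformlyElliptic g C) (γ : ℝ → EV N) : 0 ≤ pathEnergy g γ :=
  intervalIntegral.integral_nonneg zero_le_one fun _ _ =>
    mul_nonneg (by norm_num) (hell.quadForm_nonneg _ _)

lemma energy_nonneg (hell : UniformlyElliptic g C) (x y : EV N) : 0 ≤ energy g x y :=
  Real.sInf_nonneg <| by rintro _ ⟨γ, -, -, -, rfl⟩; exact pathEnergy_nonneg hell γ

lemma energy_le_pathEnergy (hell : UniformlyElliptic g C) {γ : ℝ → EV N}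
    (hγ : ContDiffOn ℝ 1 γ (Icc 0 1)) {x y : EV N} (h0 : γ 0 = x) (h1 : γ 1 = y) :
    energy g x y ≤ pathEnergy g γ :=
  csInf_le ⟨0, by rintro _ ⟨γ, -, -, -, rfl⟩; exact pathEnergy_nonneg hell γ⟩ ⟨γ, hγ, h0, h1, rfl⟩

lemma pathEnergy_segment_le (hell : UniformlyElliptic g C) (hg : Continuous g) (x y : EV N) :
    pathEnergy g (fun t => x + t • (y - x)) ≤ C / 4 * ‖y - x‖ ^ 2 := by
  have hderiv : ∀ t : ℝ, deriv (fun t : ℝ => x + t • (y - x)) t = y - x := fun t => by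
    simpa using (((hasDerivAt_id t).smul_const (y - x)).const_add x).deriv
  calc pathEnergy g (fun t => x + t • (y - x))
      = ∫ t in (0:ℝ)..1, (1/4 : ℝ) * quadForm (g (x + t • (y - x))) (y - x) (y - x) := by
        simp only [pathEnergy, hderiv]
    _ ≤ ∫ _ in (0:ℝ)..1, C / 4 * ‖y - x‖ ^ 2 := by
        refine intervalIntegral.integral_mono_on zero_le_one ?_ intervalIntegrable_const
          fun t _ => by linarith [(hell.2 (x + t • (y - x)) (y - x)).2]
        refine ContinuousOn.intervalIntegrable (continuousOn_const.mul ?_)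
        exact ContinuousOn.quadForm (by fun_prop) continuousOn_const continuousOn_const
    _ = C / 4 * ‖y - x‖ ^ 2 := by simp

lemma energy_le_sq_norm_sub (hell : UniformlyElliptic g C) (hg : Continuous g) (x y : EV N) :
    energy g x y ≤ C / 4 * ‖y - x‖ ^ 2 :=
  (energy_le_pathEnergy hell (by fun_prop) (by simp) (by simp)).trans
    (pathEnergy_segment_le hell hg x y)

lemma sq_norm_sub_le_pathEnergy (hell : UniformlyElliptic g C) (hg : Continuous g)
    {γ : ℝ → EV N} (hγ : ContDiffOn ℝ 1 γ (Icc 0 1)) :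
    ‖γ 1 - γ 0‖ ^ 2 / (4 * C) ≤ pathEnergy g γ := by
  set D := derivWithin γ (Icc 0 1)
  have hD : ContinuousOn D (Icc 0 1) :=
    hγ.continuousOn_derivWithin (uniqueDiffOn_Icc one_pos) le_rfl
  have hint {φ : ℝ → ℝ} (hφ : ContinuousOn φ (Icc 0 1)) : IntervalIntegrable φ volume 0 1 :=
    hφ.intervalIntegrable_of_Icc zero_le_one
  have hFTC : ‖γ 1 - γ 0‖ ≤ ∫ t in (0:ℝ)..1, ‖D t‖ := by
    rw [← intervalIntegral.integral_derivWithin_Icc_of_contDiffOn_Icc hγ zero_le_one]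
    exact intervalIntegral.norm_integral_le_integral_norm zero_le_one
  have hCS : (∫ t in (0:ℝ)..1, ‖D t‖) ^ 2 ≤ ∫ t in (0:ℝ)..1, ‖D t‖ ^ 2 := by
    simpa using sq_intervalIntegral_le one_pos (hint hD.norm) (hint (hD.norm.pow 2))
  have hC : 0 < 4 * C := by linarith [hell.1]
  calc ‖γ 1 - γ 0‖ ^ 2 / (4 * C) ≤ (∫ t in (0:ℝ)..1, ‖D t‖ ^ 2) / (4 * C) := by
        gcongr; exact (pow_le_pow_left₀ (norm_nonneg _) hFTC 2).trans hCS
    _ = ∫ t in (0:ℝ)..1, ‖D t‖ ^ 2 / (4 * C) := (intervalIntegral.integral_div _ _).symm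
    _ ≤ ∫ t in (0:ℝ)..1, (1/4 : ℝ) * quadForm (g (γ t)) (D t) (D t) := by
        refine intervalIntegral.integral_mono_on zero_le_one
          (hint ((hD.norm.pow 2).div_const (4 * C)))
          (hint (continuousOn_const.mul (.quadForm (hg.comp_continuousOn hγ.continuousOn) hD hD)))
          fun t _ => ?_
        calc ‖D t‖ ^ 2 / (4 * C) = 1/4 * (1 / C * ‖D t‖ ^ 2) := by ring
          _ ≤ 1/4 * quadForm (g (γ t)) (D t) (D t) := by gcongr; exact (hell.2 (γ t) (D t)).1
    _ = pathEnergy g γ :=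
        (intervalIntegral_comp_deriv_eq_derivWithin
          (fun t v => (1/4 : ℝ) * quadForm (g (γ t)) v v) γ zero_le_one).symm

lemma sq_norm_sub_le_energy (hell : UniformlyElliptic g C) (hg : Continuous g) (x y : EV N) :
    ‖y - x‖ ^ 2 / (4 * C) ≤ energy g x y := by
  have hseg : ContDiff ℝ 1 fun t : ℝ => x + t • (y - x) := by fun_prop
  exact le_csInf ⟨_, _, hseg.contDiffOn, by simp, by simp, rfl⟩ <| by
    rintro _ ⟨γ, hγ, rfl, rfl, rfl⟩; exact sq_norm_sub_le_pathEnergy hell hg hγ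

end Energy

section Diagonal

variable {N : ℕ} {g : EV N → Matrix (Fin N) (Fin N) ℝ} {C : ℝ}

lemma eq_of_energy_eq_zero (hell : UniformlyElliptic g C) (hg : Continuous g) {x y : EV N}
    (h : energy g x y = 0) : x = y := by
  have hle := h ▸ sq_norm_sub_le_energy hell hg x y
  have hC : 0 < 4 * C := by linarith [hell.1]
  rw [div_le_iff₀ hC, zero_mul] at hle
  have : ‖y - x‖ = 0 := pow_eq_zero_iff two_ne_zero |>.1 (le_antisymm hle (sq_nonneg _))
  exact (sub_eq_zero.1 (norm_eq_zero.1 this)).symm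

lemma energy_self (hell : UniformlyElliptic g C) (hg : Continuous g) (x : EV N) :
    energy g x x = 0 :=
  le_antisymm (by simpa using energy_le_sq_norm_sub hell hg x x) (energy_nonneg hell x x)

lemma hasFDerivAt_energy_left_self (hell : UniformlyElliptic g C) (hg : Continuous g)
    (x : EV N) : HasFDerivAt (fun w => energy g w x) (0 : EV N →L[ℝ] ℝ) x :=
  hasFDerivAt_zero_of_norm_sub_le_sq (C / 4) fun w => by
    rw [energy_self hell hg, sub_zero, Real.norm_of_nonneg (energy_nonneg hell w x), norm_sub_rev]
    exact energy_le_sq_norm_sub hell hg w x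

lemma hasFDerivAt_energy_right_self (hell : UniformlyElliptic g C) (hg : Continuous g)
    (x : EV N) : HasFDerivAt (fun w => energy g x w) (0 : EV N →L[ℝ] ℝ) x :=
  hasFDerivAt_zero_of_norm_sub_le_sq (C / 4) fun w => by
    rw [energy_self hell hg, sub_zero, Real.norm_of_nonneg (energy_nonneg hell x w)]
    exact energy_le_sq_norm_sub hell hg x w

lemma differentiableAt_energy_left_of_eikonal (hell : UniformlyElliptic g C) (hg : Continuous g)
    {A : Matrix (Fin N) (Fin N) ℝ} {x y : EV N}
    (hq : quadForm A (gradient (fun x' => energy g x' y) x)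
      (gradient (fun x' => energy g x' y) x) = energy g x y) :
    DifferentiableAt ℝ (fun x' => energy g x' y) x :=
  differentiableAt_of_quadForm_gradient_eq hq fun h0 => by
    obtain rfl := eq_of_energy_eq_zero hell hg h0
    exact (hasFDerivAt_energy_left_self hell hg x).differentiableAt

lemma differentiableAt_energy_right_of_eikonal (hell : UniformlyElliptic g C) (hg : Continuous g)
    {A : Matrix (Fin N) (Fin N) ℝ} {x y : EV N}
    (hq : quadForm A (gradient (fun y' => energy g x y') y)
      (gradient (fun y' => energy g x y') y) = energy g x y) :
    DifferentiableAt ℝ (fun y' => energy g x y') y :=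
  differentiableAt_of_quadForm_gradient_eq hq fun h0 => by
    obtain rfl := eq_of_energy_eq_zero hell hg h0
    exact (hasFDerivAt_energy_right_self hell hg x).differentiableAt

end Diagonal

section TestFunction

variable {N : ℕ} {g : EV N → Matrix (Fin N) (Fin N) ℝ} {ξ ζ : ℝ → ℝ} {lam T t : ℝ}

lemma sub_le_deltaPlus (hξ : Continuous ξ) (hζ : Continuous ζ) (ht : t ∈ Icc 0 T) :
    ξ t - ζ t ≤ DeltaPlus ξ ζ T :=
  le_csSup (isCompact_Icc.image_of_continuousOn (hξ.sub hζ).continuousOn).bddAbove ⟨t, ht, rfl⟩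

lemma sub_le_deltaMinus (hξ : Continuous ξ) (hζ : Continuous ζ) (ht : t ∈ Icc 0 T) :
    ζ t - ξ t ≤ DeltaMinus ξ ζ T :=
  sub_le_deltaPlus hζ hξ ht

lemma one_sub_mul_sub_pos (hξ : Continuous ξ) (hζ : Continuous ζ) (hlam : 0 ≤ lam)
    (hlamΔ : lam * DeltaPlus ξ ζ T < 1) (ht : t ∈ Icc 0 T) : 0 < 1 - lam * (ξ t - ζ t) := by
  nlinarith [mul_le_mul_of_nonneg_left (sub_le_deltaPlus hξ hζ ht) hlam]

lemma phiL_eq_mul (x y : EV N) :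
    PhiL g ξ ζ lam x y t = lam / (1 - lam * (ξ t - ζ t)) * energy g x y :=
  mul_div_right_comm _ _ _

lemma phiL_bounds (hξ : Continuous ξ) (hζ : Continuous ζ) (hlam : 0 ≤ lam)
    (hlamΔ : lam * DeltaPlus ξ ζ T < 1) (ht : t ∈ Icc 0 T) {x y : EV N} (hE : 0 ≤ energy g x y) :
    lam * energy g x y / (1 + lam * DeltaMinus ξ ζ T) ≤ PhiL g ξ ζ lam x y t ∧
      PhiL g ξ ζ lam x y t ≤ lam * energy g x y / (1 - lam * DeltaPlus ξ ζ T) := by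
  have hpos := one_sub_mul_sub_pos hξ hζ hlam hlamΔ ht
  have hnum : 0 ≤ lam * energy g x y := mul_nonneg hlam hE
  constructor
  · refine div_le_div_of_nonneg_left hnum hpos ?_
    nlinarith [mul_le_mul_of_nonneg_left (sub_le_deltaMinus hξ hζ ht) hlam]
  · refine div_le_div_of_nonneg_left hnum (by linarith) ?_
    nlinarith [mul_le_mul_of_nonneg_left (sub_le_deltaPlus hξ hζ ht) hlam]

lemma hasDerivAt_phiL {ξ' ζ' : ℝ} (hξ : HasDerivAt ξ ξ' t) (hζ : HasDerivAt ζ ζ' t)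
    (hden : 1 - lam * (ξ t - ζ t) ≠ 0) (x y : EV N) :
    HasDerivAt (fun τ => PhiL g ξ ζ lam x y τ)
      ((lam / (1 - lam * (ξ t - ζ t))) ^ 2 * energy g x y * (ξ' - ζ')) t := by
  refine ((hasDerivAt_const t (lam * energy g x y)).div
    (((hξ.sub hζ).const_mul lam).const_sub 1) hden).congr_deriv ?_
  simp only [Pi.sub_apply]
  field_simp
  ring

lemma quadForm_gradient_phiL_left {A : Matrix (Fin N) (Fin N) ℝ} {x y : EV N}
    (hq : quadForm A (gradient (fun x' => energy g x' y) x)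
      (gradient (fun x' => energy g x' y) x) = energy g x y) :
    quadForm A (gradient (fun x' => PhiL g ξ ζ lam x' y t) x)
      (gradient (fun x' => PhiL g ξ ζ lam x' y t) x)
      = (lam / (1 - lam * (ξ t - ζ t))) ^ 2 * energy g x y := by
  simp_rw [phiL_eq_mul]
  rw [gradient_const_mul, quadForm_smul_smul, hq]

lemma quadForm_gradient_phiL_right {A : Matrix (Fin N) (Fin N) ℝ} {x y : EV N}
    (hq : quadForm A (gradient (fun y' => energy g x y') y)
      (gradient (fun y' => energy g x y') y) = energy g x y) :
    quadForm A (gradient (fun y' => PhiL g ξ ζ lam x y' t) y)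
      (gradient (fun y' => PhiL g ξ ζ lam x y' t) y)
      = (lam / (1 - lam * (ξ t - ζ t))) ^ 2 * energy g x y := by
  simp_rw [phiL_eq_mul]
  rw [gradient_const_mul, quadForm_smul_smul, hq]

end TestFunction

theorem stmt4_general
    {N : ℕ}
    (g : EV N → Matrix (Fin N) (Fin N) ℝ)
    (hgC2 : ∀ i j, ContDiff ℝ 2 (fun x => g x i j))
    (C : ℝ) (hell : UniformlyElliptic g C)
    (Υ : ℝ)
    (heik : ∀ x y : EV N, dg g x y < Υ →
      quadForm (ginv g x) (gradient (fun x' => energy g x' y) x)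
          (gradient (fun x' => energy g x' y) x) = energy g x y ∧
      quadForm (ginv g y) (gradient (fun y' => energy g x y') y)
          (gradient (fun y' => energy g x y') y) = energy g x y)
    (T : ℝ)
    (ξ ζ : ℝ → ℝ) (hξ : ContDiff ℝ 1 ξ) (hζ : ContDiff ℝ 1 ζ)
    (lam : ℝ) (hlam : 0 < lam) (hlamΔ : lam * DeltaPlus ξ ζ T < 1) :
    -- (i)  the sandwich bounds
    (∀ (x y : EV N), ∀ t ∈ Icc (0:ℝ) T,
      lam * energy g x y / (1 + lam * DeltaMinus ξ ζ T) ≤ PhiL g ξ ζ lam x y t ∧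
      PhiL g ξ ζ lam x y t ≤ lam * energy g x y / (1 - lam * DeltaPlus ξ ζ T)) ∧
    -- (ii) classical solution of ∂ₜw = (g⁻¹(x)D_xw, D_xw) ξ̇ − (g⁻¹(y)D_yw, D_yw) ζ̇
    (∀ (x y : EV N), dg g x y < Υ → ∀ t ∈ Icc (0:ℝ) T,
      HasDerivAt (fun τ => PhiL g ξ ζ lam x y τ)
        (quadForm (ginv g x) (gradient (fun x' => PhiL g ξ ζ lam x' y t) x)
            (gradient (fun x' => PhiL g ξ ζ lam x' y t) x) * deriv ξ t
         - quadForm (ginv g y) (gradient (fun y' => PhiL g ξ ζ lam x y' t) y)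
            (gradient (fun y' => PhiL g ξ ζ lam x y' t) y) * deriv ζ t) t ∧
      DifferentiableAt ℝ (fun x' => PhiL g ξ ζ lam x' y t) x ∧
      DifferentiableAt ℝ (fun y' => PhiL g ξ ζ lam x y' t) y) := by
  have hg : Continuous g := continuous_matrix fun i j => (hgC2 i j).continuous
  refine ⟨fun x y t ht => phiL_bounds hξ.continuous hζ.continuous hlam.le hlamΔ ht
    (energy_nonneg hell x y), fun x y hxy t ht => ?_⟩
  obtain ⟨hqx, hqy⟩ := heik x y hxy
  have hden := (one_sub_mul_sub_pos hξ.continuous hζ.continuous hlam.le hlamΔ ht).ne'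
  refine ⟨?_, ?_, ?_⟩
  · rw [quadForm_gradient_phiL_left hqx, quadForm_gradient_phiL_right hqy, ← mul_sub]
    exact hasDerivAt_phiL (hξ.differentiable one_ne_zero t).hasDerivAt
      (hζ.differentiable one_ne_zero t).hasDerivAt hden x y
  · simp_rw [phiL_eq_mul]
    exact (differentiableAt_energy_left_of_eikonal hell hg hqx).const_mul _
  · simp_rw [phiL_eq_mul]
    exact (differentiableAt_energy_right_of_eikonal hell hg hqy).const_mul _

/-- Lemma 1 of the paper: the sandwich bounds for `Φ^λ` and the fact that
`Φ^λ` is a classical solution of the doubled equation on the strip `{d_g < Υ}`. -/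
theorem stmt4
    {N : ℕ} (hN : 1 ≤ N)
    (g : EV N → Matrix (Fin N) (Fin N) ℝ)
    (hgsymm : ∀ x, (g x).IsSymm)
    (hgC2 : ∀ i j, ContDiff ℝ 2 (fun x => g x i j))
    (C : ℝ) (hell : UniformlyElliptic g C)
    (Υ : ℝ) (hΥ : 0 < Υ)
    (hINJ : ContDiffOn ℝ 1 (fun p : EV N × EV N => energy g p.1 p.2)
      {p : EV N × EV N | dg g p.1 p.2 < Υ})
    (heik : ∀ x y : EV N, dg g x y < Υ →
      quadForm (ginv g x) (gradient (fun x' => energy g x' y) x)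
          (gradient (fun x' => energy g x' y) x) = energy g x y ∧
      quadForm (ginv g y) (gradient (fun y' => energy g x y') y)
          (gradient (fun y' => energy g x y') y) = energy g x y)
    (T : ℝ) (hT : 0 < T)
    (ξ ζ : ℝ → ℝ) (hξ : ContDiff ℝ 1 ξ) (hζ : ContDiff ℝ 1 ζ)
    (hξ0 : ξ 0 = 0) (hζ0 : ζ 0 = 0)
    (lam : ℝ) (hlam : 0 < lam) (hlamΔ : lam * DeltaPlus ξ ζ T < 1) :
    -- (i)  the sandwich bounds
    (∀ (x y : EV N), ∀ t ∈ Icc (0:ℝ) T,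
      lam * energy g x y / (1 + lam * DeltaMinus ξ ζ T) ≤ PhiL g ξ ζ lam x y t ∧
      PhiL g ξ ζ lam x y t ≤ lam * energy g x y / (1 - lam * DeltaPlus ξ ζ T)) ∧
    -- (ii) classical solution of ∂ₜw = (g⁻¹(x)D_xw, D_xw) ξ̇ − (g⁻¹(y)D_yw, D_yw) ζ̇
    (∀ (x y : EV N), dg g x y < Υ → ∀ t ∈ Icc (0:ℝ) T,
      HasDerivAt (fun τ => PhiL g ξ ζ lam x y τ)
        (quadForm (ginv g x) (gradient (fun x' => PhiL g ξ ζ lam x' y t) x)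
            (gradient (fun x' => PhiL g ξ ζ lam x' y t) x) * deriv ξ t
         - quadForm (ginv g y) (gradient (fun y' => PhiL g ξ ζ lam x y' t) y)
            (gradient (fun y' => PhiL g ξ ζ lam x y' t) y) * deriv ζ t) t ∧
      DifferentiableAt ℝ (fun x' => PhiL g ξ ζ lam x' y t) x ∧
      DifferentiableAt ℝ (fun y' => PhiL g ξ ζ lam x y' t) y) :=
  stmt4_general g hgC2 C hell Υ heik T ξ ζ hξ hζ lam hlam hlamΔ
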